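/- arXiv:2511.18582 — 3 statements merged into one kernel-verified Lean document; each statement's English description precedes it below -/
import Mathlib

section
/- Under the treated scoring rule S_t(a,r) with ∂S_t/∂a > 0, the optimal switching policy is a cutoff rule with threshold τ* = κ − λ, where λ = −(∂S_t/∂r)/(∂S_t/∂a). In particular, τ* < κ if ∂S_t/∂r < 0, τ* > κ if ∂S_t/∂r > 0, and τ* = κ if ∂S_t/∂r = 0. -/
/-!
With constant weights the score is affine in the two integrals, and since `∂S_t/∂a > 0` it
is, up to the positive factor `Sa` and an additive constant, the primitive of
`p ↦ (κ - λ - p) f p`, because `Sr = Sa (κ - λ - κ)`. This integrand is nonnegative left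
of `κ - λ` and nonpositive right of it, so the primitive is maximized at `κ - λ`. The sign
of `(κ - λ) - κ = Sr / Sa` is that of `Sr`.
-/

open MeasureTheory Set

theorem integral_sub_mul_nonneg {g : ℝ → ℝ} {a c : ℝ} (hg : ∀ p ∈ uIcc a c, 0 ≤ g p) :
    0 ≤ ∫ p in a..c, (c - p) * g p := by
  rcases le_total a c with hac | hca
  · refine intervalIntegral.integral_nonneg hac fun p hp => ?_
    exact mul_nonneg (sub_nonneg.2 hp.2) (hg p (Icc_subset_uIcc hp))
  · rw [intervalIntegral.integral_symm, ← intervalIntegral.integral_neg]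
    refine intervalIntegral.integral_nonneg hca fun p hp => ?_
    rw [← neg_mul, neg_sub]
    exact mul_nonneg (sub_nonneg.2 hp.1) (hg p (Icc_subset_uIcc' hp))

theorem isMaxOn_integral_sub_mul {g : ℝ → ℝ} {l u c : ℝ} (hg : ContinuousOn g (Icc l u))
    (hg_nonneg : ∀ p ∈ Icc l u, 0 ≤ g p) (hc : c ∈ Icc l u) :
    IsMaxOn (fun τ => ∫ p in l..τ, (c - p) * g p) (Icc l u) c := by
  intro τ hτ
  have hl : l ∈ Icc l u := ⟨le_rfl, hc.1.trans hc.2⟩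
  have hint : ∀ {a b}, a ∈ Icc l u → b ∈ Icc l u →
      IntervalIntegrable (fun p => (c - p) * g p) volume a b := fun ha hb =>
    ((continuousOn_const.sub continuousOn_id).mul
      (hg.mono (uIcc_subset_Icc ha hb))).intervalIntegrable
  have hdiff := intervalIntegral.integral_interval_sub_left (hint hl hc) (hint hl hτ)
  have hnonneg := integral_sub_mul_nonneg fun p hp => hg_nonneg p (uIcc_subset_Icc hτ hc hp)
  exact sub_nonneg.1 (hdiff ▸ hnonneg)

theorem mul_integral_add_mul_integral_eq {g : ℝ → ℝ} {a b κ Sa Sr : ℝ} (hSa : Sa ≠ 0)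
    (hg : ContinuousOn g (uIcc a b)) :
    Sa * (∫ p in a..b, (κ - p) * g p) + Sr * ∫ p in a..b, g p =
      Sa * ∫ p in a..b, (κ + Sr / Sa - p) * g p := by
  have hsplit : (fun p => (κ + Sr / Sa - p) * g p) =
      fun p => (κ - p) * g p + Sr / Sa * g p := by
    ext p
    ring
  have hint : IntervalIntegrable (fun p => (κ - p) * g p) volume a b :=
    ((continuousOn_const.sub continuousOn_id).mul hg).intervalIntegrable
  rw [hsplit, intervalIntegral.integral_add hint (hg.intervalIntegrable.const_mul _),
    intervalIntegral.integral_const_mul]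
  field_simp

theorem cutoff_kappa_minus_lambda_optimal_treated_general
    (n : ℕ) (κ θ Sa Sr lam : ℝ) (hSa : 0 < Sa)
    (hlam : lam = -(Sr / Sa))
    (f F A score : ℝ → ℝ)
    (hf_cont : ContinuousOn f (Set.Icc (1 / (n : ℝ)) 1))
    (hf_pos : ∀ p ∈ Set.Icc (1 / (n : ℝ)) 1, 0 < f p)
    (hF : ∀ τ, F τ = ∫ p in (1 / (n : ℝ))..τ, f p)
    (hA : ∀ τ, A τ = θ + ∫ p in (1 / (n : ℝ))..τ, (κ - p) * f p)
    (hscore : ∀ τ, score τ = Sa * A τ + Sr * F τ)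
    (hτ : κ - lam ∈ Set.Icc (1 / (n : ℝ)) 1) :
    (∀ τ ∈ Set.Icc (1 / (n : ℝ)) 1, score τ ≤ score (κ - lam)) ∧
      (Sr < 0 → κ - lam < κ) ∧ (0 < Sr → κ < κ - lam) ∧ (Sr = 0 → κ - lam = κ) := by
  set l : ℝ := 1 / (n : ℝ)
  have hshift : κ - lam = κ + Sr / Sa := by rw [hlam, sub_neg_eq_add]
  have hscore_eq : ∀ τ ∈ Icc l 1,
      score τ = Sa * θ + Sa * ∫ p in l..τ, (κ - lam - p) * f p := fun τ hτ' => by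
    have hl : l ∈ Icc l 1 := ⟨le_rfl, hτ'.1.trans hτ'.2⟩
    rw [hscore, hA, hF, mul_add, add_assoc, hshift,
      mul_integral_add_mul_integral_eq hSa.ne' (hf_cont.mono (uIcc_subset_Icc hl hτ'))]
  have hmax := isMaxOn_integral_sub_mul hf_cont (fun p hp => (hf_pos p hp).le) hτ
  refine ⟨fun τ hτ' => ?_, fun h => ?_, fun h => ?_, fun h => ?_⟩
  · rw [hscore_eq τ hτ', hscore_eq _ hτ]
    gcongr
    exact hmax hτ'
  · linarith [div_neg_of_neg_of_pos h hSa]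
  · linarith [div_pos h hSa]
  · rw [hshift, h, zero_div, add_zero]

/-- Under the treated scoring rule with constant marginal weights
`Sa = ∂S_t/∂a > 0` and `Sr = ∂S_t/∂r`, the score of a cutoff policy `τ` is
`Sa * A(τ) + Sr * r(τ)` with `A(τ) = θ + ∫_{1/n}^τ (κ-p) f p dp` and
`r(τ) = F(τ) = ∫_{1/n}^τ f`.  The optimal cutoff is `τ* = κ - lam` with
`λ = -(Sr/Sa)`; moreover `τ* < κ` iff `Sr < 0`, `τ* > κ` iff `Sr > 0`, and
`τ* = κ` iff `Sr = 0`. -/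
theorem cutoff_kappa_minus_lambda_optimal_treated
    (n : ℕ) (hn : 0 < n) (κ θ Sa Sr lam : ℝ) (hSa : 0 < Sa)
    (hlam : lam = -(Sr / Sa))
    (f F A score : ℝ → ℝ)
    (hf_cont : ContinuousOn f (Set.Icc (1 / (n : ℝ)) 1))
    (hf_pos : ∀ p ∈ Set.Icc (1 / (n : ℝ)) 1, 0 < f p)
    (hF : ∀ τ, F τ = ∫ p in (1 / (n : ℝ))..τ, f p)
    (hA : ∀ τ, A τ = θ + ∫ p in (1 / (n : ℝ))..τ, (κ - p) * f p)
    (hscore : ∀ τ, score τ = Sa * A τ + Sr * F τ)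
    (hτ : κ - lam ∈ Set.Icc (1 / (n : ℝ)) 1) :
    (∀ τ ∈ Set.Icc (1 / (n : ℝ)) 1, score τ ≤ score (κ - lam)) ∧
      (Sr < 0 → κ - lam < κ) ∧ (0 < Sr → κ < κ - lam) ∧ (Sr = 0 → κ - lam = κ) :=
  cutoff_kappa_minus_lambda_optimal_treated_general n κ θ Sa Sr lam hSa hlam f F A score hf_cont
    hf_pos hF hA hscore hτ
end

section
/- In the conditional setting (D = 1), the maximal achievable accuracy A(κ) = θ + ∫_{1/n}^{κ}(κ−p) f(p) dp strictly exceeds both the worker's unaided accuracy θ and the AI's accuracy κ, provided f > 0 on [1/n,1] and κ ∈ (1/n,1). -/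
open MeasureTheory Set

/-! Both gaps are integrals of positive functions. `A κ - θ = ∫_{1/n}^κ (κ - p) f p dp` directly,
and since `f` has mass `1` and mean `θ`, moving the part of `∫ (p - κ) f = θ - κ` below `κ` to the
other side gives `A κ - κ = ∫_κ^1 (p - κ) f p dp`. -/

section

variable {f : ℝ → ℝ} {a b κ : ℝ}

theorem integral_mul_add_integral_sub_mul_eq (hf : ContinuousOn f (Icc a b))
    (haκ : a ≤ κ) (hκb : κ ≤ b) :
    (∫ p in a..b, p * f p) + ∫ p in a..κ, (κ - p) * f p =
      κ * (∫ p in a..b, f p) + ∫ p in κ..b, (p - κ) * f p := by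
  have hcont : ContinuousOn (fun p => (p - κ) * f p) (Icc a b) :=
    (continuousOn_id.sub continuousOn_const).mul hf
  have hleft : IntervalIntegrable (fun p => (p - κ) * f p) volume a κ :=
    (hcont.mono (Icc_subset_Icc_right hκb)).intervalIntegrable_of_Icc haκ
  have hright : IntervalIntegrable (fun p => (p - κ) * f p) volume κ b :=
    (hcont.mono (Icc_subset_Icc_left haκ)).intervalIntegrable_of_Icc hκb
  have hexpand : ∫ p in a..b, (p - κ) * f p = (∫ p in a..b, p * f p) - κ * ∫ p in a..b, f p := by
    have hab := haκ.trans hκb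
    have hmoment : IntervalIntegrable (fun p => p * f p) volume a b :=
      (continuousOn_id.mul hf).intervalIntegrable_of_Icc hab
    rw [← intervalIntegral.integral_const_mul, ← intervalIntegral.integral_sub hmoment
      ((hf.intervalIntegrable_of_Icc hab).const_mul κ)]
    simp only [sub_mul]
  have hflip : ∫ p in a..κ, (κ - p) * f p = -∫ p in a..κ, (p - κ) * f p := by
    rw [← intervalIntegral.integral_neg]
    simp only [← neg_mul, neg_sub]
  rw [hflip]
  linarith [intervalIntegral.integral_add_adjacent_intervals hleft hright]

theorem integral_right_sub_mul_pos (hf : ContinuousOn f (Icc a b)) (hpos : ∀ p ∈ Ioo a b, 0 < f p)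
    (hab : a < b) : 0 < ∫ p in a..b, (b - p) * f p :=
  intervalIntegral.intervalIntegral_pos_of_pos_on
    (((continuousOn_const.sub continuousOn_id).mul hf).intervalIntegrable_of_Icc hab.le)
    (fun p hp => mul_pos (sub_pos.2 hp.2) (hpos p hp)) hab

theorem integral_sub_left_mul_pos (hf : ContinuousOn f (Icc a b)) (hpos : ∀ p ∈ Ioo a b, 0 < f p)
    (hab : a < b) : 0 < ∫ p in a..b, (p - a) * f p :=
  intervalIntegral.intervalIntegral_pos_of_pos_on
    (((continuousOn_id.sub continuousOn_const).mul hf).intervalIntegrable_of_Icc hab.le)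
    (fun p hp => mul_pos (sub_pos.2 hp.1) (hpos p hp)) hab

end

theorem collaboration_beats_both_general
    (n : ℕ) (κ θ : ℝ) (hκ : κ ∈ Set.Ioo (1 / (n : ℝ)) 1)
    (f A : ℝ → ℝ)
    (hf_cont : ContinuousOn f (Set.Icc (1 / (n : ℝ)) 1))
    (hf_pos : ∀ p ∈ Set.Icc (1 / (n : ℝ)) 1, 0 < f p)
    (hmass : (∫ p in (1 / (n : ℝ))..1, f p) = 1)
    (hθ : (∫ p in (1 / (n : ℝ))..1, p * f p) = θ)
    (hA : ∀ τ, A τ = θ + ∫ p in (1 / (n : ℝ))..τ, (κ - p) * f p) :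
    θ < A κ ∧ κ < A κ := by
  obtain ⟨hlow, hhigh⟩ := hκ
  have hbalance := integral_mul_add_integral_sub_mul_eq hf_cont hlow.le hhigh.le
  rw [hθ, hmass, mul_one] at hbalance
  have hgain_low : 0 < ∫ p in (1 / (n : ℝ))..κ, (κ - p) * f p :=
    integral_right_sub_mul_pos (hf_cont.mono (Icc_subset_Icc_right hhigh.le))
      (fun p hp => hf_pos p ⟨hp.1.le, hp.2.le.trans hhigh.le⟩) hlow
  have hgain_high : 0 < ∫ p in κ..1, (p - κ) * f p :=
    integral_sub_left_mul_pos (hf_cont.mono (Icc_subset_Icc_left hlow.le))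
      (fun p hp => hf_pos p ⟨hlow.le.trans hp.1.le, hp.2.le⟩) hhigh
  rw [hA κ]
  constructor <;> linarith

/-- In the conditional setting (`D = 1`), maximal achievable accuracy
`A(κ) = θ + ∫_{1/n}^κ (κ-p) f p dp` strictly exceeds both the worker's unaided
accuracy `θ` and the AI's accuracy `κ`, provided `f > 0` on `[1/n,1]` and
`κ ∈ (1/n, 1)`. -/
theorem collaboration_beats_both
    (n : ℕ) (hn : 0 < n) (κ θ : ℝ) (hκ : κ ∈ Set.Ioo (1 / (n : ℝ)) 1)
    (f A : ℝ → ℝ)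
    (hf_cont : ContinuousOn f (Set.Icc (1 / (n : ℝ)) 1))
    (hf_pos : ∀ p ∈ Set.Icc (1 / (n : ℝ)) 1, 0 < f p)
    (hmass : (∫ p in (1 / (n : ℝ))..1, f p) = 1)
    (hθ : (∫ p in (1 / (n : ℝ))..1, p * f p) = θ)
    (hA : ∀ τ, A τ = θ + ∫ p in (1 / (n : ℝ))..τ, (κ - p) * f p) :
    θ < A κ ∧ κ < A κ :=
  collaboration_beats_both_general n κ θ hκ f A hf_cont hf_pos hmass hθ hA
end

section
/- If the score is linear, S_t(a,r) = a − λ·r with λ > 0, then the score-maximizing cutoff is τ* = κ − λ, and the resulting accuracy loss relative to the accuracy-maximizing cutoff κ equals ∫_{κ−λ}^{κ} (κ − p) f(p) dp > 0 (when κ − λ ≥ 1/n and f > 0). -/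
open MeasureTheory Set

/-! With `D = 1` the score is `S τ = θ + ∫_{1/n}^τ (κ - λ - p) f p dp`, a primitive whose
integrand changes sign from positive to negative at `p = κ - λ`; hence `κ - λ` maximizes it.
The accuracy loss is the integral of `A' = (κ - p) f` over `[κ - λ, κ]`, where it is positive. -/

namespace intervalIntegral

variable {f : ℝ → ℝ} {a b c : ℝ}

theorem integral_sub_mul_sub_const_mul_integral (hf : IntervalIntegrable f volume a b)
    (lam : ℝ) :
    (∫ p in a..b, (c - p) * f p) - lam * ∫ p in a..b, f p =
      ∫ p in a..b, (c - lam - p) * f p := by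
  rw [← integral_const_mul, ← integral_sub (hf.continuousOn_mul (by fun_prop))
    (hf.const_mul lam)]
  congr 1 with p
  ring

theorem integral_sub_mul_nonneg {τ : ℝ} (hf : ∀ p ∈ uIcc τ c, 0 ≤ f p) :
    0 ≤ ∫ p in τ..c, (c - p) * f p := by
  rcases le_total τ c with hτc | hcτ
  · refine integral_nonneg hτc fun p hp => mul_nonneg (by linarith [hp.2]) (hf p ?_)
    rwa [uIcc_of_le hτc]
  · rw [integral_symm, ← integral_neg]
    refine integral_nonneg hcτ fun p hp => neg_nonneg.mpr <|
      mul_nonpos_of_nonpos_of_nonneg (by linarith [hp.1]) (hf p ?_)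
    rwa [uIcc_of_ge hcτ]

theorem isMaxOn_integral_sub_mul (hf : IntervalIntegrable f volume a b)
    (hf_nonneg : ∀ p ∈ Icc a b, 0 ≤ f p) (hc : c ∈ Icc a b) :
    IsMaxOn (fun τ => ∫ p in a..τ, (c - p) * f p) (Icc a b) c := by
  intro τ hτ
  have hsub : ∀ {u}, u ∈ Icc a b → uIcc a u ⊆ uIcc a b := fun hu =>
    uIcc_subset_uIcc_left (Icc_subset_uIcc hu)
  have hint : ∀ {u}, u ∈ Icc a b → IntervalIntegrable (fun p => (c - p) * f p) volume a u :=
    fun hu => (hf.mono_set (hsub hu)).continuousOn_mul (by fun_prop)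
  have hdiff := integral_interval_sub_left (hint hc) (hint hτ)
  have hnonneg : 0 ≤ ∫ p in τ..c, (c - p) * f p :=
    integral_sub_mul_nonneg fun p hp => hf_nonneg p (uIcc_subset_Icc hτ hc hp)
  show (∫ p in a..τ, (c - p) * f p) ≤ ∫ p in a..c, (c - p) * f p
  linarith

theorem integral_sub_mul_pos (hbc : b < c) (hf : IntervalIntegrable f volume b c)
    (hpos : ∀ p ∈ Ioo b c, 0 < f p) : 0 < ∫ p in b..c, (c - p) * f p :=
  intervalIntegral_pos_of_pos_on (hf.continuousOn_mul (by fun_prop))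
    (fun p hp => mul_pos (by linarith [hp.2]) (hpos p hp)) hbc

end intervalIntegral

open intervalIntegral in
theorem linear_score_optimal_cutoff_and_accuracy_loss_general
    (n : ℕ) (κ θ lam : ℝ) (hlam : 0 < lam)
    (hκ : κ ∈ Set.Ioo (1 / (n : ℝ)) 1) (hτ : 1 / (n : ℝ) ≤ κ - lam)
    (f F A S : ℝ → ℝ)
    (hf_cont : ContinuousOn f (Set.Icc (1 / (n : ℝ)) 1))
    (hf_pos : ∀ p ∈ Set.Icc (1 / (n : ℝ)) 1, 0 < f p)
    (hF : ∀ τ, F τ = ∫ p in (1 / (n : ℝ))..τ, f p)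
    (hA : ∀ τ, A τ = θ + ∫ p in (1 / (n : ℝ))..τ, (κ - p) * f p)
    (hS : ∀ τ, S τ = A τ - lam * F τ) :
    (∀ τ ∈ Set.Icc (1 / (n : ℝ)) 1, S τ ≤ S (κ - lam)) ∧
      A κ - A (κ - lam) = (∫ p in (κ - lam)..κ, (κ - p) * f p) ∧
      0 < ∫ p in (κ - lam)..κ, (κ - p) * f p := by
  set a : ℝ := 1 / (n : ℝ)
  have hκ_mem : κ ∈ Icc a 1 := Ioo_subset_Icc_self hκ
  have hcut_mem : κ - lam ∈ Icc a 1 := ⟨hτ, by linarith [hκ.2]⟩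
  have hf_int : IntervalIntegrable f volume a 1 :=
    hf_cont.intervalIntegrable_of_Icc (hκ_mem.1.trans hκ_mem.2)
  have hf_int_left : ∀ u ∈ Icc a 1, IntervalIntegrable f volume a u := fun u hu =>
    hf_int.mono_set (uIcc_subset_uIcc_left (Icc_subset_uIcc hu))
  have hscore : ∀ τ ∈ Icc a 1, S τ = θ + ∫ p in a..τ, (κ - lam - p) * f p := fun τ hτ' => by
    rw [hS, hA, hF, add_sub_assoc, integral_sub_mul_sub_const_mul_integral (hf_int_left τ hτ')]
  have hweighted : ∀ u ∈ Icc a 1,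
      IntervalIntegrable (fun p => (κ - p) * f p) volume a u := fun u hu =>
    (hf_int_left u hu).continuousOn_mul (by fun_prop)
  refine ⟨fun τ hτ' => ?_, ?_, ?_⟩
  · rw [hscore τ hτ', hscore _ hcut_mem]
    exact (add_le_add_iff_left θ).mpr <|
      isMaxOn_integral_sub_mul hf_int (fun p hp => (hf_pos p hp).le) hcut_mem hτ'
  · rw [hA, hA, add_sub_add_left_eq_sub,
      integral_interval_sub_left (hweighted κ hκ_mem) (hweighted _ hcut_mem)]
  · exact integral_sub_mul_pos (by linarith)
      (hf_int.mono_set (uIcc_subset_uIcc (Icc_subset_uIcc hcut_mem) (Icc_subset_uIcc hκ_mem)))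
      fun p hp => hf_pos p ⟨hcut_mem.1.trans hp.1.le, hp.2.le.trans hκ_mem.2⟩

/-- With linear score `S(τ) = A(τ) - λ F(τ)`, `λ > 0`,
`A(τ) = θ + ∫_{1/n}^τ (κ-p) f p dp`, `F(τ) = ∫_{1/n}^τ f` (D = 1 normalization),
the score-maximizing cutoff is `τ* = κ - λ`, and the accuracy loss relative to
the accuracy-maximizing cutoff `κ` equals `∫_{κ-λ}^{κ} (κ-p) f p dp > 0`
(when `κ - λ ≥ 1/n` and `f > 0`). -/
theorem linear_score_optimal_cutoff_and_accuracy_loss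
    (n : ℕ) (hn : 0 < n) (κ θ lam : ℝ) (hlam : 0 < lam)
    (hκ : κ ∈ Set.Ioo (1 / (n : ℝ)) 1) (hτ : 1 / (n : ℝ) ≤ κ - lam)
    (f F A S : ℝ → ℝ)
    (hf_cont : ContinuousOn f (Set.Icc (1 / (n : ℝ)) 1))
    (hf_pos : ∀ p ∈ Set.Icc (1 / (n : ℝ)) 1, 0 < f p)
    (hF : ∀ τ, F τ = ∫ p in (1 / (n : ℝ))..τ, f p)
    (hA : ∀ τ, A τ = θ + ∫ p in (1 / (n : ℝ))..τ, (κ - p) * f p)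
    (hS : ∀ τ, S τ = A τ - lam * F τ) :
    (∀ τ ∈ Set.Icc (1 / (n : ℝ)) 1, S τ ≤ S (κ - lam)) ∧
      A κ - A (κ - lam) = (∫ p in (κ - lam)..κ, (κ - p) * f p) ∧
      0 < ∫ p in (κ - lam)..κ, (κ - p) * f p :=
  linear_score_optimal_cutoff_and_accuracy_loss_general n κ θ lam hlam hκ hτ f F A S hf_cont hf_pos
    hF hA hS
end
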